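/- If a/b and c/d are consecutive elements of the Farey sequence of order n with a/b < c/d (so a, c ≥ 0, 1 ≤ b, d ≤ n, gcd(a,b) = gcd(c,d) = 1, and no reduced fraction with denominator at most n lies strictly between them), then b·c - a·d = 1; in particular the matrix with columns (c, d) and (a, b) lies in SL₂(ℤ). -/
import Mathlib


set_option maxHeartbeats 1600000 in
/-- If `a/b` and `c/d` are consecutive elements of the Farey sequence of order
`n` with `a/b < c/d` (both reduced fractions in `[0,1]` with denominators in
`[1,n]`, and no reduced fraction with denominator at most `n` lies strictly
between them), then `b*c - a*d = 1`; in particular the matrix with columns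
`(c,d)` and `(a,b)` has determinant `1`, i.e. lies in `SL₂(ℤ)`. -/
theorem farey_neighbors (n a b c d : ℕ)
    (hb1 : 1 ≤ b) (hbn : b ≤ n) (hd1 : 1 ≤ d) (hdn : d ≤ n)
    (hab : Nat.gcd a b = 1) (hcd : Nat.gcd c d = 1)
    (hab1 : a ≤ b) (hcd1 : c ≤ d)
    (hlt : (a : ℚ) / b < (c : ℚ) / d)
    (hconsec : ∀ p q : ℕ, 1 ≤ q → q ≤ n → Nat.gcd p q = 1 →
      ¬((a : ℚ) / b < (p : ℚ) / q ∧ (p : ℚ) / q < (c : ℚ) / d)) :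
    (b : ℤ) * c - (a : ℤ) * d = 1 ∧
      (!![(c : ℤ), (a : ℤ); (d : ℤ), (b : ℤ)]).det = 1 := by
  have hb0 : (0:ℤ) < b := by exact_mod_cast hb1
  have hd0 : (0:ℤ) < d := by exact_mod_cast hd1
  have hbQ : (0:ℚ) < b := by exact_mod_cast hb1
  have hdQ : (0:ℚ) < d := by exact_mod_cast hd1
  have hbnZ : (b:ℤ) ≤ n := by exact_mod_cast hbn
  have hdnZ : (d:ℤ) ≤ n := by exact_mod_cast hdn
  have ha0 : (0:ℤ) ≤ a := Int.natCast_nonneg a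
  -- Bezout
  obtain ⟨x0, y0, hxy0⟩ : ∃ x y : ℤ, (b:ℤ) * x - (a:ℤ) * y = 1 := by
    refine ⟨Nat.gcdB a b, -(Nat.gcdA a b), ?_⟩
    have h := Nat.gcd_eq_gcd_ab a b
    rw [hab] at h
    push_cast at h ⊢
    linarith
  -- shift so that n - b < y ≤ n
  set t : ℤ := ((n:ℤ) - y0) / b with ht
  set y : ℤ := y0 + b * t with hy
  set x : ℤ := x0 + a * t with hx
  have hkey : (b:ℤ) * x - (a:ℤ) * y = 1 := by
    rw [hx, hy]; linear_combination hxy0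
  have hmod := Int.mul_ediv_add_emod ((n:ℤ) - y0) b
  have hr0 : 0 ≤ ((n:ℤ) - y0) % b := Int.emod_nonneg _ (ne_of_gt hb0)
  have hrb : ((n:ℤ) - y0) % b < b := Int.emod_lt_of_pos _ hb0
  have hyn : y ≤ n := by rw [hy, ht]; linarith
  have hylb : (n:ℤ) - b < y := by rw [hy, ht]; linarith
  have hy1 : 1 ≤ y := by linarith
  have hx1 : 1 ≤ x := by nlinarith
  -- coprimality of x, y
  have hcop : IsCoprime x y := ⟨b, -a, by linarith⟩
  -- naturals p q
  obtain ⟨p, hp⟩ : ∃ p : ℕ, (p:ℤ) = x := ⟨x.toNat, Int.toNat_of_nonneg (by linarith)⟩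
  obtain ⟨q, hq⟩ : ∃ q : ℕ, (q:ℤ) = y := ⟨y.toNat, Int.toNat_of_nonneg (by linarith)⟩
  have hq1 : 1 ≤ q := by exact_mod_cast hq ▸ hy1
  have hqn : q ≤ n := by exact_mod_cast hq ▸ hyn
  have hpq : Nat.gcd p q = 1 := by
    have : Int.gcd (p:ℤ) (q:ℤ) = 1 := by
      rw [hp, hq]; exact Int.isCoprime_iff_gcd_eq_one.mp hcop
    simpa using this
  have hqQ : (0:ℚ) < q := by exact_mod_cast hq1
  -- a/b < p/q
  have h1 : (a:ℚ)/b < (p:ℚ)/q := by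
    rw [div_lt_div_iff₀ hbQ hqQ]
    have : (a:ℤ) * q < p * b := by rw [hp, hq]; nlinarith
    exact_mod_cast this
  -- from hlt : b*c - a*d ≥ 1
  have hbc : 1 ≤ (b:ℤ) * c - a * d := by
    rw [div_lt_div_iff₀ hbQ hdQ] at hlt
    have : (a:ℤ) * d < c * b := by exact_mod_cast hlt
    linarith
  -- p/q ≤ c/d
  have hle : (d:ℤ) * x ≤ c * y := by
    by_contra hcon
    push_neg at hcon
    have h2 : 1 ≤ (d:ℤ) * x - c * y := by linarith
    have hid : (b:ℤ) * ((d:ℤ) * x - c * y) + y * ((b:ℤ) * c - a * d) = d := by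
      linear_combination (d:ℤ) * hkey
    have e1 : (b:ℤ) ≤ b * ((d:ℤ) * x - c * y) := le_mul_of_one_le_right hb0.le h2
    have e2 : y ≤ y * ((b:ℤ) * c - a * d) := le_mul_of_one_le_right (by linarith) hbc
    linarith
  -- hence p/q = c/d
  have hge : (c:ℤ) * y ≤ d * x := by
    have := hconsec p q hq1 hqn hpq
    have h2 : ¬ ((p:ℚ)/q < (c:ℚ)/d) := fun h => this ⟨h1, h⟩
    push_neg at h2
    rw [div_le_div_iff₀ hdQ hqQ] at h2
    have : (c:ℤ) * q ≤ p * d := by exact_mod_cast h2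
    rw [hp, hq] at this; linarith
  have heq : (d:ℤ) * x = c * y := le_antisymm hle hge
  -- y = d and x = c
  have hcopdc : IsCoprime (d:ℤ) (c:ℤ) := by
    rw [Int.isCoprime_iff_gcd_eq_one]
    simpa [Nat.gcd_comm] using hcd
  have hyd : y ∣ (d:ℤ) := by
    have : y ∣ (d:ℤ) * x := ⟨c, by linear_combination heq⟩
    exact (hcop.symm.dvd_of_dvd_mul_right) this
  have hdy : (d:ℤ) ∣ y := by
    have : (d:ℤ) ∣ (c:ℤ) * y := ⟨x, by linear_combination -heq⟩
    exact (hcopdc.dvd_of_dvd_mul_left) this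
  have hyeq : y = d := Int.dvd_antisymm (by linarith) (le_of_lt hd0) hyd hdy
  have hxeq : x = c := by
    have : (d:ℤ) * x = d * c := by rw [heq, hyeq]; ring
    exact mul_left_cancel₀ (ne_of_gt hd0) this
  constructor
  · rw [← hxeq, ← hyeq]; exact hkey
  · have hdet := Matrix.det_fin_two_of (c:ℤ) (a:ℤ) (d:ℤ) (b:ℤ)
    rw [hdet, ← hxeq, ← hyeq]; linarith
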